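/- arXiv:2511.18056 — 7 statements merged into one kernel-verified Lean document; each statement's English description precedes it below -/
import Mathlib

section
/- Let X be a finite set and s : X × X → ℝ a similarity function. If C₁ and C₂ are both valid clusters with respect to s, then C₁ ∩ C₂ ∈ {∅, C₁, C₂}; that is, any two valid clusters are either disjoint or nested. -/
def ValidCluster {X : Type*} (s : X → X → ℝ) (C : Set X) : Prop :=
  ∀ x ∈ C, ∀ y ∈ C, ∀ z ∉ C, s x y > s x z

namespace ValidCluster

variable {X : Type*} {s : X → X → ℝ} {C₁ C₂ : Set X}

/-- A common point `a` would have to be strictly more similar to `b ∈ C₁ \ C₂` than to any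
`c ∈ C₂ \ C₁` (validity of `C₁`), and vice versa (validity of `C₂`). -/
theorem subset_of_mem_inter_of_mem_diff (h₁ : ValidCluster s C₁) (h₂ : ValidCluster s C₂)
    {a b : X} (ha : a ∈ C₁ ∩ C₂) (hb : b ∈ C₁ \ C₂) : C₂ ⊆ C₁ := by
  intro c hc₂
  by_contra hc₁
  exact (h₁ a ha.1 b hb.1 c hc₁).asymm (h₂ a ha.2 c hc₂ b hb.2)

theorem subset_or_subset_of_inter_nonempty (h₁ : ValidCluster s C₁) (h₂ : ValidCluster s C₂)
    (hne : (C₁ ∩ C₂).Nonempty) : C₁ ⊆ C₂ ∨ C₂ ⊆ C₁ := by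
  obtain ⟨a, ha⟩ := hne
  by_cases hsub : C₁ ⊆ C₂
  · exact Or.inl hsub
  · obtain ⟨b, hb₁, hb₂⟩ := Set.not_subset.mp hsub
    exact Or.inr (h₁.subset_of_mem_inter_of_mem_diff h₂ ha ⟨hb₁, hb₂⟩)

end ValidCluster

theorem valid_clusters_laminar_general {X : Type*} (s : X → X → ℝ)
    (C₁ C₂ : Set X) (h₁ : ValidCluster s C₁) (h₂ : ValidCluster s C₂) :
    C₁ ∩ C₂ = ∅ ∨ C₁ ∩ C₂ = C₁ ∨ C₁ ∩ C₂ = C₂ := by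
  rcases (C₁ ∩ C₂).eq_empty_or_nonempty with hempty | hne
  · exact Or.inl hempty
  · rcases h₁.subset_or_subset_of_inter_nonempty h₂ hne with h₁₂ | h₂₁
    · exact Or.inr (Or.inl (Set.inter_eq_left.mpr h₁₂))
    · exact Or.inr (Or.inr (Set.inter_eq_right.mpr h₂₁))

/-- Any two valid clusters are either disjoint or nested. -/
theorem valid_clusters_laminar {X : Type*} [Fintype X] (s : X → X → ℝ)
    (C₁ C₂ : Set X) (h₁ : ValidCluster s C₁) (h₂ : ValidCluster s C₂) :
    C₁ ∩ C₂ = ∅ ∨ C₁ ∩ C₂ = C₁ ∨ C₁ ∩ C₂ = C₂ :=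
  valid_clusters_laminar_general s C₁ C₂ h₁ h₂
end

section
/- Let X be a nonempty finite set and s : X × X → ℝ a similarity function that is symmetric (s(x,y) = s(y,x)) and satisfies s(x,x) > s(x,y) for all x ≠ y. Then the collection H* of all valid clusters of X with respect to s is itself a tree on X (it contains X and every singleton, and is laminar), hence H* is a valid hierarchy, and every valid hierarchy T on X with respect to s satisfies T ⊆ H*. Consequently H* is the greatest element of the set of valid hierarchies partially ordered by inclusion. -/
/-- A *tree* on `X`: a collection of nonempty subsets of `X` that is laminar,
contains all singletons, and contains the full set `X`. -/
def IsTreeOn {X : Type*} (T : Set (Set X)) : Prop :=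
  (∀ t ∈ T, t.Nonempty) ∧
  (∀ u ∈ T, ∀ v ∈ T, u ∩ v = ∅ ∨ u ∩ v = u ∨ u ∩ v = v) ∧
  (∀ x : X, ({x} : Set X) ∈ T) ∧
  (Set.univ : Set X) ∈ T

/-- A *valid hierarchy* on `X` with respect to `s`: a tree on `X`
all of whose members are valid clusters. -/
def ValidHierarchy {X : Type*} (s : X → X → ℝ) (T : Set (Set X)) : Prop :=
  IsTreeOn T ∧ ∀ t ∈ T, ValidCluster s t

/-- The *finest valid hierarchy* `H*(X,s)`: the collection of all (nonempty)
valid clusters of `X` with respect to `s`. -/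
def FinestHierarchy {X : Type*} (s : X → X → ℝ) : Set (Set X) :=
  {C : Set X | C.Nonempty ∧ ValidCluster s C}

/-- If `z ∈ u ∩ v`, `x ∈ u \ v` and `y ∈ v \ u`, validity of `u` gives `s z x > s z y`
and validity of `v` gives the reverse. -/
theorem ValidCluster.inter_eq_empty_or_subset_or_supset {X : Type*} {s : X → X → ℝ}
    {u v : Set X} (hu : ValidCluster s u) (hv : ValidCluster s v) :
    u ∩ v = ∅ ∨ u ⊆ v ∨ v ⊆ u := by
  rcases (u ∩ v).eq_empty_or_nonempty with huv | ⟨z, hzu, hzv⟩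
  · exact Or.inl huv
  refine Or.inr (or_iff_not_imp_left.mpr fun huv y hyv => ?_)
  by_contra hyu
  obtain ⟨x, hxu, hxv⟩ := Set.not_subset.mp huv
  exact lt_asymm (hu z hzu x hxu y hyu) (hv z hzv y hyv x hxv)

theorem validCluster_singleton {X : Type*} {s : X → X → ℝ}
    (hself : ∀ x y : X, x ≠ y → s x x > s x y) (x : X) :
    ValidCluster s {x} := by
  rintro a ha b hb z hz
  rw [Set.mem_singleton_iff] at ha hb hz
  rw [ha, hb]
  exact hself x z (Ne.symm hz)

theorem validCluster_univ {X : Type*} (s : X → X → ℝ) : ValidCluster s Set.univ :=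
  fun _ _ _ _ z hz => absurd (Set.mem_univ z) hz

theorem isTreeOn_finestHierarchy {X : Type*} [Nonempty X] {s : X → X → ℝ}
    (hself : ∀ x y : X, x ≠ y → s x x > s x y) :
    IsTreeOn (FinestHierarchy s) := by
  refine ⟨fun t ht => ht.1, fun u hu v hv => ?_,
    fun x => ⟨Set.singleton_nonempty x, validCluster_singleton hself x⟩,
    ⟨Set.univ_nonempty, validCluster_univ s⟩⟩
  rcases hu.2.inter_eq_empty_or_subset_or_supset hv.2 with h | h | h
  · exact Or.inl h
  · exact Or.inr (Or.inl (Set.inter_eq_left.mpr h))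
  · exact Or.inr (Or.inr (Set.inter_eq_right.mpr h))

theorem validHierarchy_finestHierarchy {X : Type*} [Nonempty X] {s : X → X → ℝ}
    (hself : ∀ x y : X, x ≠ y → s x x > s x y) :
    ValidHierarchy s (FinestHierarchy s) :=
  ⟨isTreeOn_finestHierarchy hself, fun _ ht => ht.2⟩

theorem ValidHierarchy.subset_finestHierarchy {X : Type*} {s : X → X → ℝ}
    {T : Set (Set X)} (hT : ValidHierarchy s T) : T ⊆ FinestHierarchy s :=
  fun t ht => ⟨hT.1.1 t ht, hT.2 t ht⟩

theorem finest_hierarchy_is_greatest_general {X : Type*} [Nonempty X]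
    (s : X → X → ℝ)
    (hself : ∀ x y : X, x ≠ y → s x x > s x y) :
    ValidHierarchy s (FinestHierarchy s) ∧
      IsGreatest {T : Set (Set X) | ValidHierarchy s T} (FinestHierarchy s) :=
  have hH := validHierarchy_finestHierarchy hself
  ⟨hH, hH, fun _ hT => ValidHierarchy.subset_finestHierarchy hT⟩

/-- The collection `H*` of all valid clusters is itself a valid hierarchy, and it is
the greatest element (under `⊆`) of the set of valid hierarchies. -/
theorem finest_hierarchy_is_greatest {X : Type*} [Fintype X] [Nonempty X]
    (s : X → X → ℝ) (hsym : ∀ x y : X, s x y = s y x)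
    (hself : ∀ x y : X, x ≠ y → s x x > s x y) :
    ValidHierarchy s (FinestHierarchy s) ∧
      IsGreatest {T : Set (Set X) | ValidHierarchy s T} (FinestHierarchy s) :=
  finest_hierarchy_is_greatest_general s hself
end

section
/- Let X be a nonempty finite set and s : X × X → ℝ a symmetric similarity function with s(x,x) > s(x,y) for all x ≠ y. For any tree T on X, let T⁺ = {t ∈ T : t is a valid cluster with respect to s} be the pruned collection obtained by removing from T all members violating validity. Then T⁺ is a valid hierarchy on X with respect to s, and T⁺ = T ∩ H*(X,s), where H*(X,s) is the collection of all valid clusters. -/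
theorem IsTreeOn.of_subset {X : Type*} {T T' : Set (Set X)} (hT : IsTreeOn T) (hsub : T' ⊆ T)
    (hsing : ∀ x : X, ({x} : Set X) ∈ T') (huniv : Set.univ ∈ T') : IsTreeOn T' :=
  ⟨fun t ht => hT.1 t (hsub ht), fun u hu v hv => hT.2.1 u (hsub hu) v (hsub hv), hsing, huniv⟩

theorem sep_validCluster_eq_inter_finestHierarchy {X : Type*} (s : X → X → ℝ)
    {T : Set (Set X)} (hne : ∀ t ∈ T, t.Nonempty) :
    {t ∈ T | ValidCluster s t} = T ∩ FinestHierarchy s :=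
  Set.ext fun t => ⟨fun ⟨ht, hv⟩ => ⟨ht, hne t ht, hv⟩, fun ⟨ht, _, hv⟩ => ⟨ht, hv⟩⟩

theorem pruned_tree_is_valid_hierarchy_general {X : Type*}
    (s : X → X → ℝ)
    (hself : ∀ x y : X, x ≠ y → s x x > s x y)
    (T : Set (Set X)) (hT : IsTreeOn T) :
    ValidHierarchy s {t ∈ T | ValidCluster s t} ∧
      {t ∈ T | ValidCluster s t} = T ∩ FinestHierarchy s := by
  have hpruned_tree : IsTreeOn {t ∈ T | ValidCluster s t} :=
    hT.of_subset (Set.sep_subset T _)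
      (fun x => ⟨hT.2.2.1 x, validCluster_singleton hself x⟩) ⟨hT.2.2.2, validCluster_univ s⟩
  exact ⟨⟨hpruned_tree, fun _ ht => ht.2⟩, sep_validCluster_eq_inter_finestHierarchy s hT.1⟩

/-- Pruning an arbitrary tree of its non-valid members yields a valid hierarchy,
and this pruned collection equals `T ∩ H*(X,s)`. -/
theorem pruned_tree_is_valid_hierarchy {X : Type*} [Fintype X] [Nonempty X]
    (s : X → X → ℝ) (hsym : ∀ x y : X, s x y = s y x)
    (hself : ∀ x y : X, x ≠ y → s x x > s x y)
    (T : Set (Set X)) (hT : IsTreeOn T) :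
    ValidHierarchy s {t ∈ T | ValidCluster s t} ∧
      {t ∈ T | ValidCluster s t} = T ∩ FinestHierarchy s :=
  pruned_tree_is_valid_hierarchy_general s hself T hT
end

section
/- Ward's linkage violates the monotonicity-across-merges condition for dissimilarities: there exist positive integers n₁, n₂, n₃, n₄ and nonnegative reals d₁₂, d₁₃, d₁₄, d₂₃, d₂₄, d₃₄ such that d₁₃ < min(d₁₄, d₃₄) and d₂₃ < min(d₂₄, d₃₄), and yet W₃ ≥ min(W₄, d₃₄), where W₃ = ((n₁+n₃)·d₁₃ + (n₂+n₃)·d₂₃ − n₃·d₁₂)/(n₁+n₂+n₃) and W₄ = ((n₁+n₄)·d₁₄ + (n₂+n₄)·d₂₄ − n₄·d₁₂)/(n₁+n₂+n₄) are the Ward updates of the dissimilarity from the merged cluster t₁ ∪ t₂ to t₃ and to t₄, respectively. -/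
/-- Ward's linkage violates the monotonicity-across-merges condition for
dissimilarities: there are cluster sizes and pairwise dissimilarities where each of
`t₁, t₂` is closer to `t₃` than to `t₄` (and than `t₃` is to `t₄`), yet the Ward
update makes the merged cluster `t₁ ∪ t₂` not strictly closer to `t₃`. -/
theorem ward_violates_monotonicity :
    ∃ (n₁ n₂ n₃ n₄ : ℕ) (d₁₂ d₁₃ d₁₄ d₂₃ d₂₄ d₃₄ : ℝ),
      0 < n₁ ∧ 0 < n₂ ∧ 0 < n₃ ∧ 0 < n₄ ∧
      0 ≤ d₁₂ ∧ 0 ≤ d₁₃ ∧ 0 ≤ d₁₄ ∧ 0 ≤ d₂₃ ∧ 0 ≤ d₂₄ ∧ 0 ≤ d₃₄ ∧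
      d₁₃ < min d₁₄ d₃₄ ∧ d₂₃ < min d₂₄ d₃₄ ∧
      (((n₁ : ℝ) + n₃) * d₁₃ + ((n₂ : ℝ) + n₃) * d₂₃ - (n₃ : ℝ) * d₁₂) /
          ((n₁ : ℝ) + n₂ + n₃) ≥
        min ((((n₁ : ℝ) + n₄) * d₁₄ + ((n₂ : ℝ) + n₄) * d₂₄ - (n₄ : ℝ) * d₁₂) /
          ((n₁ : ℝ) + n₂ + n₄)) d₃₄ := by
  -- Merging two coincident singletons at distance 3 from t₃ puts the merged cluster at Ward
  -- distance (2·3 + 2·3)/3 = 4 from t₃, which already equals d₃₄.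
  refine ⟨1, 1, 1, 1, 0, 3, 100, 3, 100, 4, ?_⟩
  norm_num
end

section
/- Let X be a nonempty finite set and s : X × X → ℝ a symmetric similarity function with s(x,x) > s(x,y) for all x ≠ y, which is moreover ultrametric in the similarity sense: s(x,y) ≥ min(s(x,z), s(y,z)) for all x, y, z ∈ X. Let H* = H*(X,s) be the finest valid hierarchy (the collection of all valid clusters), and for x, y ∈ X let lca(x,y) denote the ⊆-minimal member of H* containing both x and y. Then there exists a height function h : H* → ℝ such that h(t) > h(t') whenever t, t' ∈ H* with t ⊊ t', and s(x,y) = h(lca(x,y)) for all x, y ∈ X. -/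
/-- `t` is the least common ancestor of `x` and `y` in the laminar family `H`:
it is a member of `H` containing both `x` and `y`, and it is contained in every
member of `H` containing both. -/
def IsLca {X : Type*} (H : Set (Set X)) (x y : X) (t : Set X) : Prop :=
  t ∈ H ∧ x ∈ t ∧ y ∈ t ∧ ∀ t' ∈ H, x ∈ t' → y ∈ t' → t ⊆ t'

section Clustering

variable {X : Type*} {s : X → X → ℝ}

noncomputable def clusterHeight (s : X → X → ℝ) (t : Set X) : ℝ :=
  sInf (Set.image2 s t t)

theorem clusterHeight_le [Finite X] {t : Set X} {x y : X} (hx : x ∈ t) (hy : y ∈ t) :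
    clusterHeight s t ≤ s x y :=
  csInf_le (Set.toFinite _).bddBelow (Set.mem_image2_of_mem hx hy)

theorem le_clusterHeight {t : Set X} {r : ℝ} (ht : t.Nonempty)
    (h : ∀ u ∈ t, ∀ v ∈ t, r ≤ s u v) : r ≤ clusterHeight s t := by
  apply le_csInf (ht.image2 ht)
  rintro _ ⟨u, hu, v, hv, rfl⟩
  exact h u hu v hv

theorem exists_mem_mem_clusterHeight_eq [Finite X] {t : Set X} (ht : t.Nonempty) :
    ∃ x ∈ t, ∃ y ∈ t, s x y = clusterHeight s t :=
  (ht.image2 ht).csInf_mem (Set.toFinite _)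

theorem ValidCluster.clusterHeight_lt_of_ssubset [Finite X] {t t' : Set X}
    (hvalid : ValidCluster s t) (ht : t.Nonempty) (hss : t ⊂ t') :
    clusterHeight s t' < clusterHeight s t := by
  obtain ⟨z, hzt', hzt⟩ := Set.exists_of_ssubset hss
  obtain ⟨x, hx, y, hy, hxy⟩ := exists_mem_mem_clusterHeight_eq (s := s) ht
  calc clusterHeight s t' ≤ s x z := clusterHeight_le (hss.subset hx) hzt'
    _ < s x y := hvalid x hx y hy z hzt
    _ = clusterHeight s t := hxy

def simBall (s : X → X → ℝ) (x : X) (r : ℝ) : Set X :=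
  {u | r ≤ s x u}

section Ultrametric

variable (hsym : ∀ x y : X, s x y = s y x)
  (hultra : ∀ x y z : X, s x y ≥ min (s x z) (s y z))
include hsym hultra

theorem le_of_mem_simBall {x u v : X} {r : ℝ} (hu : u ∈ simBall s x r)
    (hv : v ∈ simBall s x r) : r ≤ s u v := by
  have hux : r ≤ s u x := hsym u x ▸ hu
  have hvx : r ≤ s v x := hsym v x ▸ hv
  exact (le_min hux hvx).trans (hultra u v x)

theorem validCluster_simBall (x : X) (r : ℝ) : ValidCluster s (simBall s x r) := by
  intro u hu v hv w hw
  have hxw : s x w < r := not_le.mp hw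
  have hwu : s w u ≤ s x w :=
    (min_le_iff.mp (hultra x w u)).resolve_left (not_le.mpr (hxw.trans_le hu))
  calc s u w = s w u := hsym u w
    _ < r := hwu.trans_lt hxw
    _ ≤ s u v := le_of_mem_simBall hsym hultra hu hv

end Ultrametric

end Clustering

theorem ultrametric_finest_hierarchy_dendrogram_general {X : Type*} [Fintype X]
    (s : X → X → ℝ) (hsym : ∀ x y : X, s x y = s y x)
    (hself : ∀ x y : X, x ≠ y → s x x > s x y)
    (hultra : ∀ x y z : X, s x y ≥ min (s x z) (s y z)) :
    ∃ h : Set X → ℝ,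
      (∀ t ∈ FinestHierarchy s, ∀ t' ∈ FinestHierarchy s, t ⊂ t' → h t > h t') ∧
      ∀ (x y : X) (t : Set X), IsLca (FinestHierarchy s) x y t → s x y = h t := by
  refine ⟨clusterHeight s, ?_, ?_⟩
  · rintro t ⟨ht, hvalid⟩ t' - hss
    exact hvalid.clusterHeight_lt_of_ssubset ht hss
  · rintro x y t ⟨⟨ht, -⟩, hxt, hyt, hmin⟩
    have hxx : s x y ≤ s x x := by
      rcases eq_or_ne x y with rfl | hxy
      · exact le_rfl
      · exact (hself x y hxy).le
    have htB : t ⊆ simBall s x (s x y) :=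
      hmin _ ⟨⟨x, hxx⟩, validCluster_simBall hsym hultra x _⟩ hxx (le_refl (s x y))
    exact le_antisymm
      (le_clusterHeight ht fun u hu v hv => le_of_mem_simBall hsym hultra (htB hu) (htB hv))
      (clusterHeight_le hxt hyt)

/-- If the similarity `s` is ultrametric, then the finest valid hierarchy carries a
height function `h`, strictly decreasing along strict inclusions, such that
`s x y = h (lca x y)` for all `x, y`. -/
theorem ultrametric_finest_hierarchy_dendrogram {X : Type*} [Fintype X] [Nonempty X]
    (s : X → X → ℝ) (hsym : ∀ x y : X, s x y = s y x)
    (hself : ∀ x y : X, x ≠ y → s x x > s x y)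
    (hultra : ∀ x y z : X, s x y ≥ min (s x z) (s y z)) :
    ∃ h : Set X → ℝ,
      (∀ t ∈ FinestHierarchy s, ∀ t' ∈ FinestHierarchy s, t ⊂ t' → h t > h t') ∧
      ∀ (x y : X) (t : Set X), IsLca (FinestHierarchy s) x y t → s x y = h t :=
  ultrametric_finest_hierarchy_dendrogram_general s hsym hself hultra
end

section
/- Let X be a nonempty finite set and let T_bin be a binary tree on X, i.e. a tree on X such that every member t ∈ T_bin with at least two elements is the union of two disjoint members of T_bin. Then for every nonempty subset v ⊆ X with v ∉ T_bin, there exists u ∈ T_bin such that u ∩ v ∉ {∅, u, v}. -/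
namespace Set

variable {α : Type*}

def Compatible (u v : Set α) : Prop :=
  u ∩ v = ∅ ∨ u ∩ v = u ∨ u ∩ v = v

theorem Compatible.subset_or_subset_or_eq_union {t₁ t₂ v : Set α} (hv : v ⊆ t₁ ∪ t₂)
    (h₁ : Compatible t₁ v) (h₂ : Compatible t₂ v) : v ⊆ t₁ ∨ v ⊆ t₂ ∨ v = t₁ ∪ t₂ := by
  have hsplit : v = t₁ ∩ v ∪ t₂ ∩ v := by
    rw [← union_inter_distrib_right, inter_eq_right.mpr hv]
  rcases h₁ with h₁ | h₁ | h₁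
  · right; left
    rw [hsplit, h₁, empty_union]
    exact inter_subset_left
  · rcases h₂ with h₂ | h₂ | h₂
    · left
      rw [hsplit, h₂, union_empty]
      exact inter_subset_left
    · right; right
      rw [hsplit, h₁, h₂]
    · exact Or.inr (Or.inl (inter_eq_right.mp h₂))
  · exact Or.inl (inter_eq_right.mp h₁)

theorem ssubset_union_left_of_disjoint {s t : Set α} (hst : s ∩ t = ∅) (ht : t.Nonempty) :
    s ⊂ s ∪ t := by
  rw [ssubset_union_left_iff]
  obtain ⟨x, hx⟩ := ht
  exact fun hts => (eq_empty_iff_forall_notMem.mp hst) x ⟨hts hx, hx⟩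

theorem mem_of_subset_of_forall_compatible [Finite α] {T : Set (Set α)}
    (hne : ∀ t ∈ T, t.Nonempty)
    (hbin : ∀ t ∈ T, t.Nontrivial → ∃ t₁ ∈ T, ∃ t₂ ∈ T, t₁ ∩ t₂ = ∅ ∧ t = t₁ ∪ t₂)
    {v : Set α} (hv : v.Nonempty) (hcompat : ∀ u ∈ T, Compatible u v) :
    ∀ t ∈ T, v ⊆ t → v ∈ T := by
  intro t
  induction t using WellFoundedLT.induction with
  | _ t ih =>
    intro ht hvt
    obtain rfl | hvt' := hvt.eq_or_ssubset
    · exact ht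
    obtain ⟨x, hxt, hxv⟩ := exists_of_ssubset hvt'
    obtain ⟨y, hy⟩ := hv
    obtain ⟨t₁, ht₁, t₂, ht₂, hdisj, rfl⟩ :=
      hbin t ht ⟨x, hxt, y, hvt hy, (ne_of_mem_of_not_mem hy hxv).symm⟩
    rcases (hcompat t₁ ht₁).subset_or_subset_or_eq_union hvt (hcompat t₂ ht₂) with h | h | h
    · exact ih t₁ (ssubset_union_left_of_disjoint hdisj (hne t₂ ht₂)) ht₁ h
    · exact ih t₂ (union_comm t₂ t₁ ▸
        ssubset_union_left_of_disjoint (inter_comm t₁ t₂ ▸ hdisj) (hne t₁ ht₁)) ht₂ h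
    · exact h ▸ ht

end Set

theorem binary_tree_crossing_general {X : Type*} [Fintype X]
    (T : Set (Set X)) (hT : IsTreeOn T)
    (hbin : ∀ t ∈ T, (∃ a ∈ t, ∃ b ∈ t, a ≠ b) →
      ∃ t₁ ∈ T, ∃ t₂ ∈ T, t₁ ∩ t₂ = ∅ ∧ t = t₁ ∪ t₂)
    (v : Set X) (hv : v.Nonempty) (hvT : v ∉ T) :
    ∃ u ∈ T, ¬(u ∩ v = ∅ ∨ u ∩ v = u ∨ u ∩ v = v) := by
  by_contra! hcompat
  exact hvT (Set.mem_of_subset_of_forall_compatible hT.1 hbin hv hcompat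
    Set.univ hT.2.2.2 (Set.subset_univ v))

/-- If `T_bin` is a binary tree on `X` (every member with at least two elements is the
disjoint union of two members), then every nonempty subset `v ∉ T_bin` crosses some
member of `T_bin`: there is `u ∈ T_bin` with `u ∩ v ∉ {∅, u, v}`. -/
theorem binary_tree_crossing {X : Type*} [Fintype X] [Nonempty X]
    (T : Set (Set X)) (hT : IsTreeOn T)
    (hbin : ∀ t ∈ T, (∃ a ∈ t, ∃ b ∈ t, a ≠ b) →
      ∃ t₁ ∈ T, ∃ t₂ ∈ T, t₁ ∩ t₂ = ∅ ∧ t = t₁ ∪ t₂)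
    (v : Set X) (hv : v.Nonempty) (hvT : v ∉ T) :
    ∃ u ∈ T, ¬(u ∩ v = ∅ ∨ u ∩ v = u ∨ u ∩ v = v) :=
  binary_tree_crossing_general T hT hbin v hv hvT
end

section
/- Let X be a nonempty finite set, s : X × X → ℝ a similarity function, and T a tree on X. For t ∈ T with t ≠ X, let parent(t) denote the ⊆-minimal member of T strictly containing t (which exists and is unique by laminarity and finiteness). Then T is a valid hierarchy with respect to s if and only if for every t ∈ T with t ≠ X, for all x, y ∈ t and all z ∈ parent(t) \ t, one has s(x,y) > s(x,z). That is, the validity condition with z ranging over all of X \ t is equivalent to the condition with z ranging only over parent(t) \ t. -/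
/-- `p` is the *parent* of `t` in `T`: the `⊆`-minimal member of `T`
strictly containing `t`. -/
def IsParent {X : Type*} (T : Set (Set X)) (t p : Set X) : Prop :=
  p ∈ T ∧ t ⊂ p ∧ ∀ q ∈ T, t ⊂ q → p ⊆ q

/-!
Validity of `t` only has to be tested against points of `parent(t) \ t`: a point `z` outside
`parent(t)` is already handled by the validity of `parent(t)`, since `x, y ∈ t ⊆ parent(t)`.
So validity propagates from the root `X`, which is trivially valid, down the tree, by induction
along `⊃` (well founded because `X` is finite).
-/

section

open Set

variable {X : Type*}

theorem ValidCluster.univ (s : X → X → ℝ) : ValidCluster s univ :=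
  fun _ _ _ _ z hz => absurd (mem_univ z) hz

theorem ValidCluster.of_subset_of_forall_diff {s : X → X → ℝ} {t p : Set X}
    (hp : ValidCluster s p) (htp : t ⊆ p)
    (h : ∀ x ∈ t, ∀ y ∈ t, ∀ z ∈ p \ t, s x y > s x z) : ValidCluster s t := by
  intro x hx y hy z hzt
  by_cases hzp : z ∈ p
  · exact h x hx y hy z ⟨hzp, hzt⟩
  · exact hp x (htp hx) y (htp hy) z hzp

theorem subset_or_subset_of_laminar {T : Set (Set X)}
    (hlam : ∀ u ∈ T, ∀ v ∈ T, u ∩ v = ∅ ∨ u ∩ v = u ∨ u ∩ v = v)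
    {u v : Set X} (hu : u ∈ T) (hv : v ∈ T) (huv : (u ∩ v).Nonempty) : u ⊆ v ∨ v ⊆ u := by
  rcases hlam u hu v hv with h | h | h
  · exact absurd h huv.ne_empty
  · exact Or.inl (inter_eq_left.mp h)
  · exact Or.inr (inter_eq_right.mp h)

theorem exists_isParent [Finite X] {T : Set (Set X)}
    (hlam : ∀ u ∈ T, ∀ v ∈ T, u ∩ v = ∅ ∨ u ∩ v = u ∨ u ∩ v = v) (huniv : univ ∈ T)
    {t : Set X} (ht : t.Nonempty) (htu : t ≠ univ) : ∃ p, IsParent T t p := by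
  obtain ⟨p, ⟨hpT, htp⟩, hmin⟩ := (toFinite {q | q ∈ T ∧ t ⊂ q}).exists_minimal
    ⟨univ, huniv, ssubset_univ_iff.mpr htu⟩
  refine ⟨p, hpT, htp, fun q hqT htq => ?_⟩
  have hpq : (p ∩ q).Nonempty := ht.mono (subset_inter htp.subset htq.subset)
  rcases subset_or_subset_of_laminar hlam hpT hqT hpq with hpq' | hqp
  · exact hpq'
  · exact hmin ⟨hqT, htq⟩ hqp

end

theorem validity_iff_parent_condition_general {X : Type*} [Fintype X]
    (s : X → X → ℝ) (T : Set (Set X)) (hT : IsTreeOn T) :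
    (∀ t ∈ T, ValidCluster s t) ↔
      (∀ t ∈ T, t ≠ Set.univ → ∀ p, IsParent T t p →
        ∀ x ∈ t, ∀ y ∈ t, ∀ z ∈ p \ t, s x y > s x z) := by
  obtain ⟨hne, hlam, -, huniv⟩ := hT
  refine ⟨fun hvalid t ht _ p _ x hx y hy z hz => hvalid t ht x hx y hy z hz.2, fun hcond => ?_⟩
  intro t
  induction t using WellFoundedGT.induction with
  | ind t ih =>
    intro ht
    by_cases htu : t = Set.univ
    · exact htu ▸ ValidCluster.univ s
    obtain ⟨p, hp⟩ := exists_isParent hlam huniv (hne t ht) htu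
    exact (ih p hp.2.1 hp.1).of_subset_of_forall_diff hp.2.1.subset (hcond t ht htu p hp)

/-- A tree `T` is a valid hierarchy (all its members are valid clusters) if and only
if, for every non-root member `t`, the validity inequality holds with the outside
point `z` ranging only over `parent(t) \ t` instead of all of `X \ t`. -/
theorem validity_iff_parent_condition {X : Type*} [Fintype X] [Nonempty X]
    (s : X → X → ℝ) (T : Set (Set X)) (hT : IsTreeOn T) :
    (∀ t ∈ T, ValidCluster s t) ↔
      (∀ t ∈ T, t ≠ Set.univ → ∀ p, IsParent T t p →
        ∀ x ∈ t, ∀ y ∈ t, ∀ z ∈ p \ t, s x y > s x z) :=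
  validity_iff_parent_condition_general s T hT
end
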